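/- Security against malicious parties implies security against semi-honest parties (Lemma 2): suppose for an honest execution of a two-party sampling protocol with outputs (U,V) and views (View_A, View_B), there exist random variables X̄ and Ȳ such that (X̄,V) ~ P_{X,Y}, (U,Ȳ) ~ P_{X,Y}, (U,V) ~ P_{X,Y}, and the Markov chains (View_A, U) - X̄ - V and (View_B, V) - Ȳ - U hold. Then the Markov chains View_A - U - V and View_B - V - U hold. -/
import Mathlib


open scoped BigOperators Classical

/-- `p` is a probability distribution on the finite type `A`. -/
def IsDist {A : Type*} [Fintype A] (p : A → ℝ) : Prop :=
  (∀ a, 0 ≤ p a) ∧ ∑ a, p a = 1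

/-- The pushforward (distribution of the random variable `f`) of `p` under `f`. -/
noncomputable def push {Om A : Type*} [Fintype Om] (p : Om → ℝ) (f : Om → A) : A → ℝ :=
  fun a => ∑ om, if f om = a then p om else 0

/-- Shannon entropy `H(f)` of the random variable `f` on the probability space `(Om, p)`. -/
noncomputable def ent {Om A : Type*} [Fintype Om] [Fintype A] (p : Om → ℝ) (f : Om → A) : ℝ :=
  ∑ a, Real.negMulLog (push p f a)

/-- Conditional Shannon entropy `H(f | g)`. -/
noncomputable def condEnt {Om A B : Type*} [Fintype Om] [Fintype A] [Fintype B]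
    (p : Om → ℝ) (f : Om → A) (g : Om → B) : ℝ :=
  ent p (fun om => (f om, g om)) - ent p g

/-- Mutual information `I(f ; g)`. -/
noncomputable def mutInfo {Om A B : Type*} [Fintype Om] [Fintype A] [Fintype B]
    (p : Om → ℝ) (f : Om → A) (g : Om → B) : ℝ :=
  ent p f + ent p g - ent p (fun om => (f om, g om))

/-- Conditional mutual information `I(f ; g | h)`. -/
noncomputable def condMutInfo {Om A B C : Type*} [Fintype Om] [Fintype A] [Fintype B] [Fintype C]
    (p : Om → ℝ) (f : Om → A) (g : Om → B) (h : Om → C) : ℝ :=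
  ent p (fun om => (f om, h om)) + ent p (fun om => (g om, h om))
    - ent p (fun om => (f om, g om, h om)) - ent p h

set_option linter.unusedSectionVars false
set_option linter.unusedVariables false

open Real

section Helpers

variable {Om A B C : Type*} [Fintype Om] [Fintype A] [Fintype B] [Fintype C]

lemma push_nonneg (p : Om → ℝ) (hp : ∀ om, 0 ≤ p om) (f : Om → A) (a : A) :
    0 ≤ push p f a := by
  refine Finset.sum_nonneg fun om _ => ?_
  by_cases h : f om = a <;> simp [h, hp om]

lemma sum_push (p : Om → ℝ) (f : Om → A) : ∑ a, push p f a = ∑ om, p om := by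
  unfold push
  rw [Finset.sum_comm]
  refine Finset.sum_congr rfl fun om _ => ?_
  simp

lemma push_fst (p : Om → ℝ) (f : Om → A) (g : Om → B) (a : A) :
    push p f a = ∑ b, push p (fun om => (f om, g om)) (a, b) := by
  unfold push
  rw [Finset.sum_comm]
  refine Finset.sum_congr rfl fun om _ => ?_
  by_cases h : f om = a <;> simp [Prod.ext_iff, h]

lemma push_snd (p : Om → ℝ) (f : Om → A) (g : Om → B) (b : B) :
    push p g b = ∑ a, push p (fun om => (f om, g om)) (a, b) := by
  unfold push
  rw [Finset.sum_comm]
  refine Finset.sum_congr rfl fun om _ => ?_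
  by_cases h : g om = b <;> simp [Prod.ext_iff, h]

lemma push_mid (p : Om → ℝ) (f : Om → A) (g : Om → B) (h : Om → C) (a : A) (c : C) :
    push p (fun om => (f om, h om)) (a, c)
      = ∑ b, push p (fun om => (f om, g om, h om)) (a, b, c) := by
  unfold push
  rw [Finset.sum_comm]
  refine Finset.sum_congr rfl fun om _ => ?_
  by_cases h1 : f om = a <;> by_cases h2 : h om = c <;> simp [Prod.ext_iff, h1, h2]

lemma ent_congr (p : Om → ℝ) (f g : Om → A) (h : ∀ a, push p f a = push p g a) :
    ent p f = ent p g := by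
  unfold ent
  exact Finset.sum_congr rfl fun a _ => by rw [h a]

lemma ent_comp (p : Om → ℝ) (e : A ≃ B) (f : Om → A) :
    ent p (fun om => e (f om)) = ent p f := by
  unfold ent
  rw [← Equiv.sum_comp e (fun b => negMulLog (push p (fun om => e (f om)) b))]
  refine Finset.sum_congr rfl fun a _ => ?_
  congr 1
  unfold push
  refine Finset.sum_congr rfl fun om _ => ?_
  simp [Equiv.apply_eq_iff_eq]

lemma negMulLog_sum {ι : Type*} [Fintype ι] (w : ι → ℝ) (x : ℝ) (hx : x = ∑ i, w i) :
    negMulLog x = ∑ i, -(w i * log x) := by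
  rw [Finset.sum_neg_distrib, ← Finset.sum_mul, ← hx, negMulLog_eq_neg]

end Helpers




section Gibbs
variable {A B C : Type*} [Fintype A] [Fintype B] [Fintype C]

/-- Gibbs-type inequality giving submodularity of entropy. -/
lemma sum_gibbs (q : A → B → C → ℝ) (hq : ∀ a b c, 0 ≤ q a b c) :
    0 ≤ ∑ a, ∑ b, ∑ c,
      (q a b c * log (q a b c) + q a b c * log (∑ a', ∑ b', q a' b' c)
        - q a b c * log (∑ b', q a b' c) - q a b c * log (∑ a', q a' b c)) := by
  classical
  set F : A → C → ℝ := fun a c => ∑ b, q a b c with hF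
  set G : B → C → ℝ := fun b c => ∑ a, q a b c with hG
  set Hc : C → ℝ := fun c => ∑ a, ∑ b, q a b c with hHc
  set r : A → B → C → ℝ := fun a b c => if Hc c = 0 then 0 else F a c * G b c / Hc c with hr
  have hF0 : ∀ a c, 0 ≤ F a c := fun a c => Finset.sum_nonneg fun b _ => hq a b c
  have hG0 : ∀ b c, 0 ≤ G b c := fun b c => Finset.sum_nonneg fun a _ => hq a b c
  have hH0 : ∀ c, 0 ≤ Hc c := fun c => Finset.sum_nonneg fun a _ => hF0 a c
  have hr0 : ∀ a b c, 0 ≤ r a b c := by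
    intro a b c
    rw [hr]
    dsimp only
    split
    · exact le_refl 0
    · exact div_nonneg (mul_nonneg (hF0 _ _) (hG0 _ _)) (hH0 _)
  have key : ∀ a b c, q a b c - r a b c ≤
      q a b c * log (q a b c) + q a b c * log (Hc c)
        - q a b c * log (F a c) - q a b c * log (G b c) := by
    intro a b c
    rcases (hq a b c).eq_or_lt with h0 | hpos
    · rw [← h0]
      simp [hr0 a b c]
    · have hqF : q a b c ≤ F a c :=
        Finset.single_le_sum (fun b' _ => hq a b' c) (Finset.mem_univ b)
      have hqG : q a b c ≤ G b c :=
        Finset.single_le_sum (fun a' _ => hq a' b c) (Finset.mem_univ a)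
      have hFpos : 0 < F a c := lt_of_lt_of_le hpos hqF
      have hGpos : 0 < G b c := lt_of_lt_of_le hpos hqG
      have hHpos : 0 < Hc c :=
        lt_of_lt_of_le hFpos (Finset.single_le_sum (fun a' _ => hF0 a' c) (Finset.mem_univ a))
      have hrval : r a b c = F a c * G b c / Hc c := by
        rw [hr]; dsimp only; rw [if_neg hHpos.ne']
      have hrpos : 0 < r a b c := by
        rw [hrval]; exact div_pos (mul_pos hFpos hGpos) hHpos
      have hlog : log (r a b c / q a b c) ≤ r a b c / q a b c - 1 :=
        log_le_sub_one_of_pos (div_pos hrpos hpos)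
      have h2 : q a b c * log (r a b c / q a b c) ≤ q a b c * (r a b c / q a b c - 1) :=
        mul_le_mul_of_nonneg_left hlog hpos.le
      have h3 : q a b c * (r a b c / q a b c - 1) = r a b c - q a b c := by
        field_simp
      have h4 : q a b c * log (r a b c / q a b c)
          = q a b c * log (F a c) + q a b c * log (G b c)
            - q a b c * log (Hc c) - q a b c * log (q a b c) := by
        rw [log_div hrpos.ne' hpos.ne', hrval, log_div (mul_pos hFpos hGpos).ne' hHpos.ne',
          log_mul hFpos.ne' hGpos.ne']
        ring
      linarith
  have hsumrH : ∀ c, ∑ a, ∑ b, r a b c = Hc c := by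
    intro c
    by_cases hc : Hc c = 0
    · simp [hr, hc]
    · have hGH : ∑ b, G b c = Hc c := by
        rw [hG, hHc]
        exact Finset.sum_comm
      have hFH : ∑ a, F a c = Hc c := rfl
      simp only [hr, if_neg hc]
      calc ∑ a, ∑ b, F a c * G b c / Hc c
          = ∑ a, (F a c * (∑ b, G b c) / Hc c) := by
            refine Finset.sum_congr rfl fun a _ => ?_
            rw [Finset.mul_sum, Finset.sum_div]
        _ = (∑ a, F a c) * (∑ b, G b c) / Hc c := by
            rw [← Finset.sum_div, ← Finset.sum_mul]
        _ = Hc c * Hc c / Hc c := by rw [hFH, hGH]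
        _ = Hc c := by field_simp
  have hsumr : ∑ a, ∑ b, ∑ c, r a b c = ∑ c, Hc c := by
    calc ∑ a, ∑ b, ∑ c, r a b c
        = ∑ a, ∑ c, ∑ b, r a b c := Finset.sum_congr rfl fun a _ => Finset.sum_comm
      _ = ∑ c, ∑ a, ∑ b, r a b c := Finset.sum_comm
      _ = ∑ c, Hc c := Finset.sum_congr rfl fun c _ => hsumrH c
  have hsumq : ∑ a, ∑ b, ∑ c, q a b c = ∑ c, Hc c := by
    calc ∑ a, ∑ b, ∑ c, q a b c
        = ∑ a, ∑ c, ∑ b, q a b c := Finset.sum_congr rfl fun a _ => Finset.sum_comm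
      _ = ∑ c, ∑ a, ∑ b, q a b c := Finset.sum_comm
      _ = ∑ c, Hc c := rfl
  calc (0 : ℝ)
      = (∑ a, ∑ b, ∑ c, q a b c) - (∑ a, ∑ b, ∑ c, r a b c) := by
        rw [hsumq, hsumr]; ring
    _ = ∑ a, ∑ b, ∑ c, (q a b c - r a b c) := by
        simp [Finset.sum_sub_distrib]
    _ ≤ _ := by
        refine Finset.sum_le_sum fun a _ => Finset.sum_le_sum fun b _ =>
          Finset.sum_le_sum fun c _ => key a b c
end Gibbs

section NonNeg
variable {Om A B C : Type*} [Fintype Om] [Fintype A] [Fintype B] [Fintype C]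

lemma condMutInfo_nonneg (p : Om → ℝ) (hp : ∀ om, 0 ≤ p om)
    (f : Om → A) (g : Om → B) (h : Om → C) : 0 ≤ condMutInfo p f g h := by
  classical
  set q : A → B → C → ℝ := fun a b c => push p (fun om => (f om, g om, h om)) (a, b, c) with hq
  have hq0 : ∀ a b c, 0 ≤ q a b c := fun a b c => push_nonneg p hp _ _
  have Efh : ent p (fun om => (f om, h om)) = ∑ a, ∑ c, negMulLog (∑ b, q a b c) := by
    unfold ent
    rw [Fintype.sum_prod_type]
    refine Finset.sum_congr rfl fun a _ => Finset.sum_congr rfl fun c _ => ?_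
    rw [push_mid p f g h a c]
  have Egh : ent p (fun om => (g om, h om)) = ∑ b, ∑ c, negMulLog (∑ a, q a b c) := by
    unfold ent
    rw [Fintype.sum_prod_type]
    refine Finset.sum_congr rfl fun b _ => Finset.sum_congr rfl fun c _ => ?_
    rw [push_snd p f (fun om => (g om, h om)) (b, c)]
  have hpc : ∀ c, push p h c = ∑ a, ∑ b, q a b c := by
    intro c
    calc push p h c = ∑ b, push p (fun om => (g om, h om)) (b, c) := push_snd p g h c
      _ = ∑ b, ∑ a, q a b c := Finset.sum_congr rfl fun b _ => by
            rw [push_snd p f (fun om => (g om, h om)) (b, c)]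
      _ = ∑ a, ∑ b, q a b c := Finset.sum_comm
  have Eh : ent p h = ∑ c, negMulLog (∑ a, ∑ b, q a b c) := by
    unfold ent
    exact Finset.sum_congr rfl fun c _ => by rw [hpc c]
  have Eq3 : ent p (fun om => (f om, g om, h om)) = ∑ a, ∑ b, ∑ c, negMulLog (q a b c) := by
    unfold ent
    rw [Fintype.sum_prod_type]
    refine Finset.sum_congr rfl fun a _ => ?_
    rw [Fintype.sum_prod_type]
  have T1 : ∑ a, ∑ c, negMulLog (∑ b, q a b c)
      = ∑ a, ∑ b, ∑ c, -(q a b c * log (∑ b', q a b' c)) := by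
    refine Finset.sum_congr rfl fun a _ => ?_
    rw [Finset.sum_comm]
    exact Finset.sum_congr rfl fun c _ => negMulLog_sum (fun b => q a b c) _ rfl
  have T2 : ∑ b, ∑ c, negMulLog (∑ a, q a b c)
      = ∑ a, ∑ b, ∑ c, -(q a b c * log (∑ a', q a' b c)) := by
    calc ∑ b, ∑ c, negMulLog (∑ a, q a b c)
        = ∑ b, ∑ c, ∑ a, -(q a b c * log (∑ a', q a' b c)) :=
          Finset.sum_congr rfl fun b _ => Finset.sum_congr rfl fun c _ =>
            negMulLog_sum (fun a => q a b c) _ rfl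
      _ = ∑ b, ∑ a, ∑ c, -(q a b c * log (∑ a', q a' b c)) :=
          Finset.sum_congr rfl fun b _ => Finset.sum_comm
      _ = ∑ a, ∑ b, ∑ c, -(q a b c * log (∑ a', q a' b c)) := Finset.sum_comm
  have T3 : ∑ c, negMulLog (∑ a, ∑ b, q a b c)
      = ∑ a, ∑ b, ∑ c, -(q a b c * log (∑ a', ∑ b', q a' b' c)) := by
    calc ∑ c, negMulLog (∑ a, ∑ b, q a b c)
        = ∑ c, ∑ a, -((∑ b, q a b c) * log (∑ a', ∑ b', q a' b' c)) :=
          Finset.sum_congr rfl fun c _ =>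
            negMulLog_sum (fun a => ∑ b, q a b c) _ rfl
      _ = ∑ c, ∑ a, ∑ b, -(q a b c * log (∑ a', ∑ b', q a' b' c)) := by
          refine Finset.sum_congr rfl fun c _ => Finset.sum_congr rfl fun a _ => ?_
          rw [Finset.sum_neg_distrib, ← Finset.sum_mul]
      _ = ∑ a, ∑ c, ∑ b, -(q a b c * log (∑ a', ∑ b', q a' b' c)) := Finset.sum_comm
      _ = ∑ a, ∑ b, ∑ c, -(q a b c * log (∑ a', ∑ b', q a' b' c)) :=
          Finset.sum_congr rfl fun a _ => Finset.sum_comm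
  have hcmi : condMutInfo p f g h = ∑ a, ∑ b, ∑ c,
      (q a b c * log (q a b c) + q a b c * log (∑ a', ∑ b', q a' b' c)
        - q a b c * log (∑ b', q a b' c) - q a b c * log (∑ a', q a' b c)) := by
    unfold condMutInfo
    rw [Efh, Egh, Eq3, Eh, T1, T2, T3]
    simp only [← Finset.sum_add_distrib, ← Finset.sum_sub_distrib]
    refine Finset.sum_congr rfl fun a _ => Finset.sum_congr rfl fun b _ =>
      Finset.sum_congr rfl fun c _ => ?_
    simp only [negMulLog_eq_neg]
    ring
  rw [hcmi]
  exact sum_gibbs q hq0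
end NonNeg
/-- Swap the first two components of a triple. -/
def rot3 {α β γ : Type*} : α × β × γ ≃ β × α × γ :=
  ⟨fun t => (t.2.1, t.1, t.2.2), fun t => (t.2.1, t.1, t.2.2), fun _ => rfl, fun _ => rfl⟩

/-- `(c, a, b) ↦ ((a, b), c)`. -/
def pack3 {α β γ : Type*} : γ × α × β ≃ (α × β) × γ :=
  ⟨fun t => ((t.2.1, t.2.2), t.1), fun t => (t.2, t.1.1, t.1.2), fun _ => rfl, fun _ => rfl⟩

/-- `(c, d, a, b) ↦ ((a, b), d, c)`. -/
def pack4 {α β γ δ : Type*} : γ × δ × α × β ≃ (α × β) × δ × γ :=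
  ⟨fun t => ((t.2.2.1, t.2.2.2), t.2.1, t.1), fun t => (t.2.2, t.2.1, t.1.1, t.1.2),
    fun _ => rfl, fun _ => rfl⟩



/-- Security against malicious parties implies security against semi-honest parties
(Lemma 2).  Let `(View_A, View_B, U, V, X̄, Ȳ)` be jointly distributed finite random
variables (with `U, X̄` on the alphabet `XA` and `V, Ȳ` on the alphabet `YA`) such that
`(X̄, V) ~ P`, `(U, Ȳ) ~ P`, `(U, V) ~ P`, and the Markov chains
`(View_A, U) - X̄ - V` and `(View_B, V) - Ȳ - U` hold.  Then the Markov chains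
`View_A - U - V` and `View_B - V - U` hold. -/
theorem malicious_implies_semihonest
    {VA VB XA YA : Type*} [Fintype VA] [Fintype VB] [Fintype XA] [Fintype YA]
    (P : XA × YA → ℝ) (hP : IsDist P)
    -- joint distribution of (View_A, View_B, U, V, X̄, Ȳ)
    (p : VA × VB × XA × YA × XA × YA → ℝ) (hp : IsDist p)
    (hXbV : ∀ a : XA × YA,
      push p (fun om => (om.2.2.2.2.1, om.2.2.2.1)) a = P a)
    (hUYb : ∀ a : XA × YA,
      push p (fun om => (om.2.2.1, om.2.2.2.2.2)) a = P a)
    (hUV : ∀ a : XA × YA,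
      push p (fun om => (om.2.2.1, om.2.2.2.1)) a = P a)
    (hMarkovA : condMutInfo p (fun om => (om.1, om.2.2.1)) (fun om => om.2.2.2.1)
      (fun om => om.2.2.2.2.1) = 0)
    (hMarkovB : condMutInfo p (fun om => (om.2.1, om.2.2.2.1)) (fun om => om.2.2.1)
      (fun om => om.2.2.2.2.2) = 0) :
    condMutInfo p (fun om => om.1) (fun om => om.2.2.2.1) (fun om => om.2.2.1) = 0 ∧
    condMutInfo p (fun om => om.2.1) (fun om => om.2.2.1) (fun om => om.2.2.2.1) = 0 := by
  classical
  constructor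
  -- Part A
  · have NA : 0 ≤ condMutInfo p (fun om => om.2.2.2.2.1) (fun om => om.2.2.2.1)
        (fun om => (om.1, om.2.2.1)) := condMutInfo_nonneg p hp.1 _ _ _
    have GA : 0 ≤ condMutInfo p (fun om => om.1) (fun om => om.2.2.2.1)
        (fun om => om.2.2.1) := condMutInfo_nonneg p hp.1 _ _ _
    -- t1 = t5 : H((A,U),X) = H(X,A,U)
    have E1 : ent p (fun om => ((om.1, om.2.2.1), om.2.2.2.2.1))
        = ent p (fun om => (om.2.2.2.2.1, om.1, om.2.2.1)) :=
      ent_comp p pack3 (fun om => (om.2.2.2.2.1, om.1, om.2.2.1))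
    -- t3 = t7 : H((A,U),V,X) = H(X,V,A,U)
    have E2 : ent p (fun om => ((om.1, om.2.2.1), om.2.2.2.1, om.2.2.2.2.1))
        = ent p (fun om => (om.2.2.2.2.1, om.2.2.2.1, om.1, om.2.2.1)) :=
      ent_comp p pack4 (fun om => (om.2.2.2.2.1, om.2.2.2.1, om.1, om.2.2.1))
    -- t6 = t11 : H(V,A,U) = H(A,V,U)
    have E3 : ent p (fun om => (om.2.2.2.1, om.1, om.2.2.1))
        = ent p (fun om => (om.1, om.2.2.2.1, om.2.2.1)) :=
      ent_comp p rot3 (fun om => (om.1, om.2.2.2.1, om.2.2.1))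
    -- t2 = t10 : H(V,X) = H(V,U)
    have E4 : ent p (fun om => (om.2.2.2.1, om.2.2.2.2.1))
        = ent p (fun om => (om.2.2.2.1, om.2.2.1)) := by
      have e1 : ent p (fun om => (om.2.2.2.1, om.2.2.2.2.1))
          = ent p (fun om => (om.2.2.2.2.1, om.2.2.2.1)) :=
        ent_comp p (Equiv.prodComm XA YA) (fun om => (om.2.2.2.2.1, om.2.2.2.1))
      have e2 : ent p (fun om => (om.2.2.2.2.1, om.2.2.2.1))
          = ent p (fun om => (om.2.2.1, om.2.2.2.1)) :=
        ent_congr p _ _ fun a => by rw [hXbV a, hUV a]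
      have e3 : ent p (fun om => (om.2.2.2.1, om.2.2.1))
          = ent p (fun om => (om.2.2.1, om.2.2.2.1)) :=
        ent_comp p (Equiv.prodComm XA YA) (fun om => (om.2.2.1, om.2.2.2.1))
      rw [e1, e2, ← e3]
    -- t4 = t12 : H(X) = H(U)
    have E5 : ent p (fun om : VA × VB × XA × YA × XA × YA => om.2.2.2.2.1)
        = ent p (fun om => om.2.2.1) := by
      refine ent_congr p _ _ fun a => ?_
      rw [push_fst p (fun om => om.2.2.2.2.1) (fun om => om.2.2.2.1) a,
        push_fst p (fun om => om.2.2.1) (fun om => om.2.2.2.1) a]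
      exact Finset.sum_congr rfl fun b _ => by rw [hXbV (a, b), hUV (a, b)]
    unfold condMutInfo at hMarkovA NA GA ⊢
    linarith [E1, E2, E3, E4, E5, hMarkovA, NA, GA]
  -- Part B
  · have NB : 0 ≤ condMutInfo p (fun om => om.2.2.2.2.2) (fun om => om.2.2.1)
        (fun om => (om.2.1, om.2.2.2.1)) := condMutInfo_nonneg p hp.1 _ _ _
    have GB : 0 ≤ condMutInfo p (fun om => om.2.1) (fun om => om.2.2.1)
        (fun om => om.2.2.2.1) := condMutInfo_nonneg p hp.1 _ _ _
    -- s1 = s5 : H((B,V),Y) = H(Y,B,V)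
    have F1 : ent p (fun om => ((om.2.1, om.2.2.2.1), om.2.2.2.2.2))
        = ent p (fun om => (om.2.2.2.2.2, om.2.1, om.2.2.2.1)) :=
      ent_comp p pack3 (fun om => (om.2.2.2.2.2, om.2.1, om.2.2.2.1))
    -- s3 = s7 : H((B,V),U,Y) = H(Y,U,B,V)
    have F2 : ent p (fun om => ((om.2.1, om.2.2.2.1), om.2.2.1, om.2.2.2.2.2))
        = ent p (fun om => (om.2.2.2.2.2, om.2.2.1, om.2.1, om.2.2.2.1)) :=
      ent_comp p pack4 (fun om => (om.2.2.2.2.2, om.2.2.1, om.2.1, om.2.2.2.1))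
    -- s6 = s11 : H(U,B,V) = H(B,U,V)
    have F3 : ent p (fun om => (om.2.2.1, om.2.1, om.2.2.2.1))
        = ent p (fun om => (om.2.1, om.2.2.1, om.2.2.2.1)) :=
      ent_comp p rot3 (fun om => (om.2.1, om.2.2.1, om.2.2.2.1))
    -- s2 = s10 : H(U,Y) = H(U,V)
    have F4 : ent p (fun om => (om.2.2.1, om.2.2.2.2.2))
        = ent p (fun om => (om.2.2.1, om.2.2.2.1)) :=
      ent_congr p _ _ fun a => by rw [hUYb a, hUV a]
    -- s4 = s12 : H(Y) = H(V)
    have F5 : ent p (fun om : VA × VB × XA × YA × XA × YA => om.2.2.2.2.2)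
        = ent p (fun om => om.2.2.2.1) := by
      refine ent_congr p _ _ fun b => ?_
      rw [push_snd p (fun om => om.2.2.1) (fun om => om.2.2.2.2.2) b,
        push_snd p (fun om => om.2.2.1) (fun om => om.2.2.2.1) b]
      exact Finset.sum_congr rfl fun a _ => by rw [hUYb (a, b), hUV (a, b)]
    unfold condMutInfo at hMarkovB NB GB ⊢
    linarith [F1, F2, F3, F4, F5, hMarkovB, NB, GB]
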